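/- arXiv:2306.07870 — 3 statements merged into one kernel-verified Lean document; each statement's English description precedes it below -/
import Mathlib

section
/- Let p be a binary word of length l. For any n ≥ 0, B_{n,p}(0) = Σ_{j=0}^{l-1} binomial(n, j); that is, the number of binary words of length n containing no occurrence of p equals the sum of binomial(n, j) for j from 0 to l−1. -/
/-- `occ p w` is the number of occurrences of `p` as a subsequence of `w`,
i.e. the number of choices of indices `i₁ < ⋯ < i_l` in `w` matching `p`. -/
def occ (p w : List Bool) : ℕ := w.sublists.count p

/-- `B n p k` is the number of binary words of length `n` with exactly `k` occurrences of `p`. -/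
noncomputable def B (n : ℕ) (p : List Bool) (k : ℕ) : ℕ :=
  Nat.card {w : List Bool // w.length = n ∧ occ p w = k}

/-- The list of runs (maximal blocks of consecutive equal letters) of a binary word. -/
def runs (p : List Bool) : List (List Bool) := p.splitBy (· == ·)

/-- The number of runs of a binary word. -/
def numRuns (p : List Bool) : ℕ := (runs p).length

/-- The number of runs of size `i` of a binary word. -/
def numRunsOfSize (p : List Bool) (i : ℕ) : ℕ := ((runs p).map List.length).count i

/-- `maxOcc n p` is the maximum number of occurrences of `p` among binary words of length `n`. -/
noncomputable def maxOcc (n : ℕ) (p : List Bool) : ℕ :=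
  sSup {k | ∃ w : List Bool, w.length = n ∧ occ p w = k}

/-- `p` has an internal zero at `n` if the sequence `(B n p k)_{k ≥ 0}` has an internal zero. -/
def HasInternalZeroAt (p : List Bool) (n : ℕ) : Prop :=
  ∃ k₁ k₂ k₃ : ℕ, k₁ < k₂ ∧ k₂ < k₃ ∧ B n p k₁ ≠ 0 ∧ B n p k₂ = 0 ∧ B n p k₃ ≠ 0

/-!
Splitting off the first letters, `a :: p'` is a subsequence of `b :: w` iff `p'` is a subsequence
of `w` (when `a = b`) or `a :: p'` is a subsequence of `w` (when `a ≠ b`). Hence the number of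
words of length `n` avoiding `p` satisfies Pascal's recurrence in `(n, p.length)`, with the same
boundary values as `∑ j < p.length, n.choose j`.
-/

open Finset

theorem List.cons_sublist_cons_of_ne {α : Type*} {a b : α} (h : a ≠ b) {l₁ l₂ : List α} :
    (a :: l₁).Sublist (b :: l₂) ↔ (a :: l₁).Sublist l₂ := by
  simp [List.sublist_cons_iff, h]

def List.consLengthEquiv {α : Type*} (P : List α → Prop) (n : ℕ) :
    {w : List α // w.length = n + 1 ∧ P w} ≃ Σ a, {w : List α // w.length = n ∧ P (a :: w)} where
  toFun
    | ⟨a :: w, hw, hP⟩ => ⟨a, w, Nat.succ.inj hw, hP⟩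
  invFun
    | ⟨a, w, hw, hP⟩ => ⟨a :: w, by simp [hw], hP⟩
  left_inv := by rintro ⟨_ | ⟨a, w⟩, hw, hP⟩ <;> first | rfl | simp at hw
  right_inv := by rintro ⟨a, w, hw, hP⟩; rfl

theorem Nat.card_length_eq_succ {α : Type*} [Fintype α] (P : List α → Prop) (n : ℕ) :
    Nat.card {w : List α // w.length = n + 1 ∧ P w} =
      ∑ a, Nat.card {w : List α // w.length = n ∧ P (a :: w)} := by
  have (a : α) : Finite {w : List α // w.length = n ∧ P (a :: w)} :=
    ((List.finite_length_eq α n).subset fun _ hw => hw.1).to_subtype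
  rw [Nat.card_congr (List.consLengthEquiv P n), Nat.card_sigma]

theorem Nat.sum_range_succ_choose_succ (n l : ℕ) :
    ∑ j ∈ range (l + 1), (n + 1).choose j =
      ∑ j ∈ range l, n.choose j + ∑ j ∈ range (l + 1), n.choose j := by
  rw [sum_range_succ' _ l, sum_range_succ' (fun j => n.choose j) l]
  simp only [Nat.choose_succ_succ, Nat.choose_zero_right, sum_add_distrib]
  ring

theorem card_length_eq_not_sublist (p : List Bool) (n : ℕ) :
    Nat.card {w : List Bool // w.length = n ∧ ¬ p.Sublist w} =
      ∑ j ∈ range p.length, n.choose j := by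
  induction n generalizing p with
  | zero =>
    cases p with
    | nil => simp
    | cons a p => simp [sum_range_succ', Nat.card_eq_one_iff_exists]
  | succ n ih =>
    cases p with
    | nil => simp
    | cons a p =>
      rw [Nat.card_length_eq_succ, Fintype.sum_bool, List.length_cons,
        Nat.sum_range_succ_choose_succ]
      cases a <;> simp [List.cons_sublist_cons, List.cons_sublist_cons_of_ne, ih, add_comm]

theorem occ_eq_zero_iff {p w : List Bool} : occ p w = 0 ↔ ¬ p.Sublist w := by
  rw [occ, List.count_eq_zero, List.mem_sublists]

theorem B_zero_eq_sum_choose (p : List Bool) (l : ℕ) (hl : p.length = l) (n : ℕ) :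
    B n p 0 = ∑ j ∈ Finset.range l, n.choose j := by
  subst hl
  rw [B, ← card_length_eq_not_sublist]
  exact Nat.card_congr (Equiv.subtypeEquivRight fun w => and_congr_right' occ_eq_zero_iff)
end

section
/- Let p be a binary word of length l that has r runs, r_1 of which are of size 1. For any n ≥ 0: if l ≥ 2 then B_{n,p}(2) = r_1 · binomial(n − r, l − r + 1), and if l = 1 then B_{n,p}(2) = binomial(n, 2). -/
open List

section Occurrences

lemma occ_eq_count_sublists' (p w : List Bool) : occ p w = w.sublists'.count p :=
  (sublists_perm_sublists' w).count_eq p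

@[simp] lemma occ_nil_right (p : List Bool) : occ p [] = if p = [] then 1 else 0 := by
  cases p <;> simp [occ]

lemma occ_cons_cons (a x : Bool) (q w : List Bool) :
    occ (a :: q) (x :: w) = occ (a :: q) w + if x = a then occ q w else 0 := by
  simp only [occ_eq_count_sublists', sublists'_cons, count_append]
  congr 1
  split_ifs with h
  · subst h
    exact count_map_of_injective _ _ cons_injective q
  · refine count_eq_zero.2 fun hm => ?_
    obtain ⟨y, -, hy⟩ := mem_map.1 hm
    exact h (cons_eq_cons.1 hy).1

@[simp] lemma occ_cons_cons_self (a : Bool) (q w : List Bool) :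
    occ (a :: q) (a :: w) = occ (a :: q) w + occ q w := by
  simp [occ_cons_cons]

lemma occ_cons_cons_of_ne {a x : Bool} (h : x ≠ a) (q w : List Bool) :
    occ (a :: q) (x :: w) = occ (a :: q) w := by
  simp [occ_cons_cons, h]

@[simp] lemma occ_nil_left (w : List Bool) : occ [] w = 1 := by
  induction w with
  | nil => simp
  | cons x w ih =>
    rw [occ_eq_count_sublists', sublists'_cons, count_append, ← occ_eq_count_sublists', ih,
      count_eq_zero.2 (by simp)]

lemma occ_cons_of_head?_ne {x : Bool} {q : List Bool} (h : q.head? ≠ some x) (w : List Bool) :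
    occ q (x :: w) = occ q w := by
  cases q with
  | nil => simp
  | cons a q => exact occ_cons_cons_of_ne (by simpa [eq_comm] using h) q w

lemma occ_pos_iff_sublist {q w : List Bool} : 0 < occ q w ↔ q <+ w := by
  rw [occ, count_pos_iff, mem_sublists]

lemma occ_pos_of_occ_cons_pos {b : Bool} {q w : List Bool} (h : 0 < occ (b :: q) w) :
    0 < occ q w :=
  occ_pos_iff_sublist.2 ((sublist_cons_self b q).trans (occ_pos_iff_sublist.1 h))

lemma two_le_occ_of_occ_cons_self_pos {a : Bool} {q w : List Bool}
    (h : 0 < occ (a :: a :: q) w) : 2 ≤ occ (a :: q) w := by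
  induction w with
  | nil => simp at h
  | cons x w ih =>
    by_cases hx : x = a
    · subst hx
      rw [occ_cons_cons_self] at h ⊢
      have hpos : 0 < occ (x :: q) w := by
        rcases Nat.eq_zero_or_pos (occ (x :: x :: q) w) with h0 | h0
        · omega
        · exact lt_of_lt_of_le two_pos (ih h0)
      have := occ_pos_of_occ_cons_pos hpos
      omega
    · rw [occ_cons_cons_of_ne hx] at h ⊢
      exact ih h

lemma occ_singleton (a : Bool) (w : List Bool) : occ [a] w = w.count a := by
  induction w with
  | nil => simp
  | cons x w ih =>
    by_cases hx : x = a
    · rw [hx, occ_cons_cons_self, occ_nil_left, ih, count_cons_self]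
    · rw [occ_cons_cons_of_ne hx, ih, count_cons_of_ne hx]

end Occurrences

section Counting

noncomputable def countWords (P : List Bool → Prop) (n : ℕ) : ℕ :=
  {w : List Bool | w.length = n ∧ P w}.ncard

variable {P Q : List Bool → Prop}

lemma B_eq_countWords (n : ℕ) (p : List Bool) (k : ℕ) :
    B n p k = countWords (fun w => occ p w = k) n :=
  Nat.card_coe_set_eq _

lemma countWords_congr (h : ∀ w, P w ↔ Q w) (n : ℕ) : countWords P n = countWords Q n := by
  simp only [countWords, h]

lemma countWords_eq_zero (h : ∀ w, ¬ P w) (n : ℕ) : countWords P n = 0 := by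
  simp [countWords, h]

lemma finite_setOf_length_eq_and (n : ℕ) (P : List Bool → Prop) :
    {w : List Bool | w.length = n ∧ P w}.Finite :=
  (finite_length_eq Bool n).subset fun _ hw => hw.1

lemma countWords_or (h : ∀ w, P w → ¬ Q w) (n : ℕ) :
    countWords (fun w => P w ∨ Q w) n = countWords P n + countWords Q n := by
  rw [countWords, countWords, countWords,
    ← Set.ncard_union_eq _ (finite_setOf_length_eq_and n P) (finite_setOf_length_eq_and n Q)]
  · congr 1
    ext w
    simp only [Set.mem_ofPred_eq, Set.mem_union]
    tauto
  · exact Set.disjoint_left.2 fun w hP hQ => h w hP.2 hQ.2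

lemma countWords_zero [Decidable (P [])] : countWords P 0 = if P [] then 1 else 0 := by
  have : {w : List Bool | w.length = 0 ∧ P w} = if P [] then {[]} else ∅ := by
    ext w
    split_ifs <;> simp_all [length_eq_zero_iff]
  rw [countWords, this]
  split_ifs <;> simp

lemma countWords_succ (a : Bool) (n : ℕ) :
    countWords P (n + 1) =
      countWords (fun w => P (a :: w)) n + countWords (fun w => P ((!a) :: w)) n := by
  have hsplit : {w : List Bool | w.length = n + 1 ∧ P w} =
      cons a '' {w | w.length = n ∧ P (a :: w)} ∪
        cons (!a) '' {w | w.length = n ∧ P ((!a) :: w)} := by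
    ext w
    cases w with
    | nil => simp
    | cons x w => cases x <;> cases a <;> simp
  rw [countWords, hsplit, Set.ncard_union_eq _ ((finite_setOf_length_eq_and n _).image _)
    ((finite_setOf_length_eq_and n _).image _), Set.ncard_image_of_injective _ cons_injective,
    Set.ncard_image_of_injective _ cons_injective]
  · rfl
  · rw [Set.disjoint_left]
    rintro _ ⟨u, -, rfl⟩ ⟨v, -, hv⟩
    simp at hv

lemma countWords_count_eq (a : Bool) (n k : ℕ) :
    countWords (fun w => w.count a = k) n = n.choose k := by
  induction n generalizing k with
  | zero => cases k <;> simp [countWords_zero]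
  | succ n ih =>
    rw [countWords_succ a]
    cases k with
    | zero =>
      simp [countWords_eq_zero, count_cons_of_ne (Bool.not_ne_self a), ih]
    | succ k =>
      simp only [count_cons_self, Nat.add_right_cancel_iff, count_cons_of_ne (Bool.not_ne_self a),
        ih, Nat.choose_succ_succ']

end Counting

section Runs

lemma exists_eq_replicate_append (a : Bool) (t : List Bool) :
    ∃ k v, t = replicate k a ++ v ∧ v.head? ≠ some a := by
  induction t with
  | nil => exact ⟨0, [], rfl, by simp⟩
  | cons x t ih =>
    by_cases hx : x = a
    · obtain ⟨k, v, rfl, hv⟩ := ih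
      exact ⟨k + 1, v, by simp [hx, replicate_succ], hv⟩
    · exact ⟨0, x :: t, rfl, by simpa using hx⟩

lemma runs_replicate_append {a : Bool} {k : ℕ} (hk : k ≠ 0) {v : List Bool}
    (hv : v.head? ≠ some a) : runs (replicate k a ++ v) = replicate k a :: runs v := by
  have hne : replicate k a ≠ [] := by simpa using hk
  rw [runs, splitBy_append, splitBy_of_isChain hne (isChain_replicate_of_rel k (by simp))]
  · rfl
  · intro x hx y hy
    obtain rfl : x = a := by simpa [getLast?_replicate, hk, eq_comm] using hx
    exact beq_eq_false_iff_ne.2 fun h => hv (h ▸ hy)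

lemma runs_cons_cons_of_ne {a b : Bool} (h : a ≠ b) (t : List Bool) :
    runs (a :: b :: t) = [a] :: runs (b :: t) :=
  runs_replicate_append one_ne_zero (v := b :: t) (by simpa [eq_comm] using h)

lemma runs_cons_cons_self (a : Bool) (t : List Bool) :
    ∃ g gs, g ≠ [] ∧ runs (a :: t) = g :: gs ∧ runs (a :: a :: t) = (a :: g) :: gs := by
  obtain ⟨k, v, rfl, hv⟩ := exists_eq_replicate_append a t
  exact ⟨replicate (k + 1) a, runs v, by simp, runs_replicate_append k.succ_ne_zero hv,
    runs_replicate_append (k + 1).succ_ne_zero hv⟩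

lemma numRuns_singleton (a : Bool) : numRuns [a] = 1 := rfl

lemma numRuns_cons_pos (a : Bool) (t : List Bool) : 0 < numRuns (a :: t) :=
  length_pos_of_ne_nil (splitBy_ne_nil.2 (cons_ne_nil a t))

lemma numRuns_cons_cons_of_ne {a b : Bool} (h : a ≠ b) (t : List Bool) :
    numRuns (a :: b :: t) = numRuns (b :: t) + 1 := by
  simp [numRuns, runs_cons_cons_of_ne h]

lemma numRuns_cons_cons_self (a : Bool) (t : List Bool) :
    numRuns (a :: a :: t) = numRuns (a :: t) := by
  obtain ⟨g, gs, -, h₁, h₂⟩ := runs_cons_cons_self a t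
  simp [numRuns, h₁, h₂]

def repeats : List Bool → ℕ
  | a :: b :: t => (if a = b then 1 else 0) + repeats (b :: t)
  | _ => 0

@[simp] lemma repeats_cons_cons_self (a : Bool) (t : List Bool) :
    repeats (a :: a :: t) = repeats (a :: t) + 1 := by
  simp [repeats, add_comm]

@[simp] lemma repeats_cons_cons_of_ne {a b : Bool} (h : a ≠ b) (t : List Bool) :
    repeats (a :: b :: t) = repeats (b :: t) := by
  simp [repeats, h]

lemma numRuns_add_repeats (p : List Bool) : numRuns p + repeats p = p.length := by
  induction p with
  | nil => rfl
  | cons a t ih =>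
    cases t with
    | nil => rfl
    | cons b t =>
      by_cases hab : a = b
      · subst hab
        simp only [repeats_cons_cons_self, numRuns_cons_cons_self, length_cons] at ih ⊢
        omega
      · simp only [repeats_cons_cons_of_ne hab, numRuns_cons_cons_of_ne hab, length_cons] at ih ⊢
        omega

def numSingletonRunsAfterFirst (p : List Bool) : ℕ :=
  (((runs p).tail).map length).count 1

lemma numSingletonRunsAfterFirst_singleton (a : Bool) : numSingletonRunsAfterFirst [a] = 0 := rfl

lemma numSingletonRunsAfterFirst_cons_cons_self (a : Bool) (t : List Bool) :
    numSingletonRunsAfterFirst (a :: a :: t) = numSingletonRunsAfterFirst (a :: t) := by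
  obtain ⟨g, gs, -, h₁, h₂⟩ := runs_cons_cons_self a t
  simp [numSingletonRunsAfterFirst, h₁, h₂]

lemma numSingletonRunsAfterFirst_cons_cons_of_ne {a b : Bool} (h : a ≠ b) (t : List Bool) :
    numSingletonRunsAfterFirst (a :: b :: t) = numRunsOfSize (b :: t) 1 := by
  simp [numSingletonRunsAfterFirst, numRunsOfSize, runs_cons_cons_of_ne h]

lemma numRunsOfSize_one_cons (a : Bool) (t : List Bool) :
    numRunsOfSize (a :: t) 1 =
      numSingletonRunsAfterFirst (a :: t) + if t.head? = some a then 0 else 1 := by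
  rcases t with _ | ⟨b, t⟩
  · rfl
  by_cases hab : a = b
  · subst hab
    obtain ⟨g, gs, hg, -, h₂⟩ := runs_cons_cons_self a t
    simp [numRunsOfSize, numSingletonRunsAfterFirst, h₂, hg]
  · simp [numRunsOfSize, numSingletonRunsAfterFirst, runs_cons_cons_of_ne hab, Ne.symm hab]

end Runs

section ShiftedChoose

-- Without the guard, `(n - m).choose 0 = 1` would survive for `n < m`.
def shiftedChoose (m s n : ℕ) : ℕ := if m ≤ n then (n - m).choose s else 0

lemma shiftedChoose_eq_zero {m s n : ℕ} (h : n < m + s) : shiftedChoose m s n = 0 := by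
  unfold shiftedChoose
  split_ifs
  · exact Nat.choose_eq_zero_of_lt (by omega)
  · rfl

lemma shiftedChoose_succ_right (m s n : ℕ) :
    shiftedChoose m (s + 1) n = (n - m).choose (s + 1) := by
  unfold shiftedChoose
  split_ifs with h
  · rfl
  · rw [Nat.sub_eq_zero_of_le (by omega), Nat.choose_zero_succ]

lemma shiftedChoose_succ_succ_left (m s n : ℕ) :
    shiftedChoose (m + 1) s (n + 1) = shiftedChoose m s n := by
  simp [shiftedChoose]

lemma shiftedChoose_succ_succ (m s n : ℕ) :
    shiftedChoose m (s + 1) (n + 1) = shiftedChoose m (s + 1) n + shiftedChoose m s n := by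
  unfold shiftedChoose
  split_ifs with h₁ h₂ <;> try omega
  · rw [Nat.sub_add_comm h₂, Nat.choose_succ_succ', add_comm]
  · rw [show n + 1 - m = 0 by omega, Nat.choose_zero_succ]

end ShiftedChoose

section Recursions

noncomputable def numAvoiding (k : ℕ) (p : List Bool) (n : ℕ) : ℕ :=
  countWords (fun w => occ p w = 0 ∧ occ p.tail w = k) n

noncomputable def numOnceWithTailOnce (p : List Bool) (n : ℕ) : ℕ :=
  countWords (fun w => occ p w = 1 ∧ occ p.tail w = 1) n

variable {a b : Bool} {q : List Bool}

lemma occ_eq_one_of_occ_cons_eq_one (hab : a ≠ b) (hq : q.head? ≠ some b) {w : List Bool}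
    (h₀ : occ (a :: b :: q) w = 0) (h₁ : occ (b :: q) w = 1) : occ q w = 1 := by
  rcases w with _ | ⟨x, w⟩
  · simp at h₁
  by_cases hx : x = b
  · subst hx
    rw [occ_cons_cons_self] at h₁
    have := @occ_pos_of_occ_cons_pos x q w
    rw [occ_cons_of_head?_ne hq]
    omega
  · obtain rfl : x = a := by cases x <;> cases a <;> cases b <;> simp_all
    rw [occ_cons_cons_self] at h₀
    rw [occ_cons_cons_of_ne hab] at h₁
    omega

lemma numAvoiding_cons_cons_self (k : ℕ) (a : Bool) (q : List Bool) (n : ℕ) :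
    numAvoiding k (a :: a :: q) (n + 1) =
      numAvoiding k (a :: a :: q) n + numAvoiding k (a :: q) n := by
  rw [numAvoiding, countWords_succ a, add_comm]
  congr 1
  · refine countWords_congr (fun w => ?_) n
    simp only [tail_cons, occ_cons_cons_of_ne (Bool.not_ne_self a)]
  · refine countWords_congr (fun w => ?_) n
    have := @occ_pos_of_occ_cons_pos a (a :: q) w
    simp only [tail_cons, occ_cons_cons_self]
    omega

lemma numAvoiding_cons_cons_of_ne (hab : a ≠ b) {k : ℕ} (hk : k ≠ 0) (n : ℕ) :
    numAvoiding k (a :: b :: q) (n + 1) =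
      countWords (fun w => occ (a :: b :: q) w = 0 ∧ occ (b :: q) w + occ q w = k) n := by
  have hb : (!b) = a := by cases a <;> cases b <;> simp_all
  have hstarts_a :
      countWords (fun w => occ (a :: b :: q) (a :: w) = 0 ∧ occ (b :: q) (a :: w) = k) n = 0 := by
    refine countWords_eq_zero (fun w => ?_) n
    simp only [occ_cons_cons_self, occ_cons_cons_of_ne hab]
    omega
  rw [numAvoiding, countWords_succ b, hb]
  simp only [tail_cons]
  rw [hstarts_a, add_zero]
  simp only [occ_cons_cons_of_ne (Ne.symm hab), occ_cons_cons_self]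

lemma numAvoiding_one_cons_cons_of_ne (hab : a ≠ b) (n : ℕ) :
    numAvoiding 1 (a :: b :: q) (n + 1) = numAvoiding 1 (b :: q) n := by
  rw [numAvoiding_cons_cons_of_ne hab one_ne_zero]
  refine countWords_congr (fun w => ?_) n
  have := @occ_pos_of_occ_cons_pos a (b :: q) w
  have := @occ_pos_of_occ_cons_pos b q w
  simp only [tail_cons]
  omega

lemma numAvoiding_two_cons_cons_of_ne (hab : a ≠ b) (n : ℕ) :
    numAvoiding 2 (a :: b :: q) (n + 1) =
      numAvoiding 2 (b :: q) n +
        if q.head? = some b then 0 else numAvoiding 1 (a :: b :: q) n := by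
  have hsplit :
      countWords (fun w => occ (a :: b :: q) w = 0 ∧ occ (b :: q) w + occ q w = 2) n =
        numAvoiding 2 (b :: q) n +
          countWords
            (fun w => occ (a :: b :: q) w = 0 ∧ occ (b :: q) w = 1 ∧ occ q w = 1) n := by
    rw [numAvoiding, ← countWords_or (fun w h₁ h₂ => by simp only [tail_cons] at h₁; omega)]
    refine countWords_congr (fun w => ?_) n
    have := @occ_pos_of_occ_cons_pos a (b :: q) w
    have := @occ_pos_of_occ_cons_pos b q w
    simp only [tail_cons]
    omega
  rw [numAvoiding_cons_cons_of_ne hab two_ne_zero, hsplit]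
  congr 1
  split_ifs with hq
  · obtain ⟨q, rfl⟩ := head?_eq_some_iff.1 hq
    refine countWords_eq_zero (fun w ⟨_, h₁, _⟩ => ?_) n
    have := two_le_occ_of_occ_cons_self_pos (h₁ ▸ one_pos : 0 < occ (b :: b :: q) w)
    omega
  · exact countWords_congr (fun w => ⟨fun ⟨h₀, h₁, _⟩ => ⟨h₀, h₁⟩,
      fun ⟨h₀, h₁⟩ => ⟨h₀, h₁, occ_eq_one_of_occ_cons_eq_one hab hq h₀ h₁⟩⟩) n

lemma numOnceWithTailOnce_cons_cons_self (a : Bool) (q : List Bool) (n : ℕ) :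
    numOnceWithTailOnce (a :: a :: q) n = 0 :=
  countWords_eq_zero (fun w ⟨h₁, h₂⟩ => by
    have := two_le_occ_of_occ_cons_self_pos (h₁ ▸ one_pos : 0 < occ (a :: a :: q) w)
    simp only [tail_cons] at h₂
    omega) n

lemma numOnceWithTailOnce_cons_zero (a : Bool) (q : List Bool) :
    numOnceWithTailOnce (a :: q) 0 = 0 := by
  simp [numOnceWithTailOnce, countWords_zero]

lemma numOnceWithTailOnce_cons_cons_of_ne (hab : a ≠ b) (n : ℕ) :
    numOnceWithTailOnce (a :: b :: q) (n + 1) = numAvoiding 1 (a :: b :: q) n := by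
  have ha : (!a) = b := by cases a <;> cases b <;> simp_all
  have hstarts_b :
      countWords (fun w => occ (a :: b :: q) (b :: w) = 1 ∧ occ (b :: q) (b :: w) = 1) n = 0 := by
    refine countWords_eq_zero (fun w => ?_) n
    have := @occ_pos_of_occ_cons_pos a (b :: q) w
    have := @occ_pos_of_occ_cons_pos b q w
    simp only [occ_cons_cons_self, occ_cons_cons_of_ne (Ne.symm hab)]
    omega
  rw [numOnceWithTailOnce, countWords_succ a, ha]
  simp only [tail_cons]
  rw [hstarts_b, add_zero]
  refine countWords_congr (fun w => ?_) n
  simp only [tail_cons, occ_cons_cons_self, occ_cons_cons_of_ne hab]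
  omega

lemma countWords_occ_eq_two_succ (a : Bool) (q : List Bool) (n : ℕ) :
    countWords (fun w => occ (a :: q) w = 2) (n + 1) =
      countWords (fun w => occ (a :: q) w = 2) n +
        (numAvoiding 2 (a :: q) n + numOnceWithTailOnce (a :: q) n) := by
  rw [countWords_succ a, add_comm]
  congr 1
  · exact countWords_congr (fun w => by rw [occ_cons_cons_of_ne (Bool.not_ne_self a)]) n
  · rw [numAvoiding, numOnceWithTailOnce, ← countWords_or (fun w h₁ h₂ => by omega)]
    refine countWords_congr (fun w => ?_) n
    have := @occ_pos_of_occ_cons_pos a q w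
    simp only [tail_cons, occ_cons_cons_self]
    omega

end Recursions

section ClosedForms

lemma numAvoiding_one_singleton (a : Bool) (n : ℕ) : numAvoiding 1 [a] n = 1 := by
  simpa [numAvoiding, occ_singleton] using countWords_count_eq a n 0

lemma numAvoiding_one_eq (a : Bool) (q : List Bool) (n : ℕ) :
    numAvoiding 1 (a :: q) n = shiftedChoose (numRuns (a :: q)) (repeats (a :: q)) (n + 1) := by
  induction n generalizing a q with
  | zero =>
    rcases q with _ | ⟨b, q⟩
    · rw [numAvoiding_one_singleton]
      rfl
    · have := numRuns_add_repeats (a :: b :: q)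
      rw [shiftedChoose_eq_zero (by simp at this; omega)]
      simp [numAvoiding, countWords_zero]
  | succ n ih =>
    rcases q with _ | ⟨b, q⟩
    · rw [numAvoiding_one_singleton]
      simp [numRuns_singleton, repeats, shiftedChoose]
    by_cases hab : a = b
    · subst hab
      rw [numAvoiding_cons_cons_self, ih, ih, numRuns_cons_cons_self, repeats_cons_cons_self,
        shiftedChoose_succ_succ _ _ (n + 1)]
    · rw [numAvoiding_one_cons_cons_of_ne hab, ih, numRuns_cons_cons_of_ne hab,
        repeats_cons_cons_of_ne hab, shiftedChoose_succ_succ_left]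

lemma numAvoiding_two_eq (a : Bool) (q : List Bool) (n : ℕ) :
    numAvoiding 2 (a :: q) n = numSingletonRunsAfterFirst (a :: q) *
      shiftedChoose (numRuns (a :: q)) (repeats (a :: q)) n := by
  induction n generalizing a q with
  | zero =>
    rw [shiftedChoose_eq_zero (by have := numRuns_cons_pos a q; omega), mul_zero]
    rw [numAvoiding, countWords_zero, if_neg]
    rintro ⟨-, h⟩
    rw [tail_cons, occ_nil_right] at h
    split_ifs at h
    omega
  | succ n ih =>
    rcases q with _ | ⟨b, q⟩
    · rw [numSingletonRunsAfterFirst_singleton, zero_mul]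
      exact countWords_eq_zero (fun w ⟨_, h⟩ => by simp at h) _
    by_cases hab : a = b
    · subst hab
      rw [numAvoiding_cons_cons_self, ih, ih, numRuns_cons_cons_self, repeats_cons_cons_self,
        numSingletonRunsAfterFirst_cons_cons_self, shiftedChoose_succ_succ, mul_add]
    · rw [numAvoiding_two_cons_cons_of_ne hab, ih, numAvoiding_one_eq, numRuns_cons_cons_of_ne hab,
        repeats_cons_cons_of_ne hab, numSingletonRunsAfterFirst_cons_cons_of_ne hab,
        numRunsOfSize_one_cons, shiftedChoose_succ_succ_left]
      split_ifs <;> ring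

lemma numOnceWithTailOnce_cons_cons (a b : Bool) (q : List Bool) (n : ℕ) :
    numOnceWithTailOnce (a :: b :: q) n = (if b = a then 0 else 1) *
      shiftedChoose (numRuns (a :: b :: q)) (repeats (a :: b :: q)) n := by
  by_cases hab : a = b
  · subst hab
    simp [numOnceWithTailOnce_cons_cons_self]
  rw [if_neg (Ne.symm hab), one_mul]
  cases n with
  | zero =>
    rw [numOnceWithTailOnce_cons_zero, shiftedChoose_eq_zero]
    have := numRuns_cons_pos a (b :: q)
    omega
  | succ n => rw [numOnceWithTailOnce_cons_cons_of_ne hab, numAvoiding_one_eq]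

lemma countWords_occ_eq_two (a b : Bool) (q : List Bool) (n : ℕ) :
    countWords (fun w => occ (a :: b :: q) w = 2) n = numRunsOfSize (a :: b :: q) 1 *
      shiftedChoose (numRuns (a :: b :: q)) (repeats (a :: b :: q) + 1) n := by
  induction n with
  | zero =>
    rw [shiftedChoose_eq_zero (by omega), mul_zero]
    simp [countWords_zero]
  | succ n ih =>
    rw [countWords_occ_eq_two_succ, ih, numAvoiding_two_eq, numOnceWithTailOnce_cons_cons,
      numRunsOfSize_one_cons, shiftedChoose_succ_succ]
    simp only [head?_cons, Option.some.injEq]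
    ring

end ClosedForms

theorem B_two_eq (p : List Bool) (l r r₁ : ℕ) (hl : p.length = l) (hr : numRuns p = r)
    (hr₁ : numRunsOfSize p 1 = r₁) (n : ℕ) :
    (2 ≤ l → B n p 2 = r₁ * (n - r).choose (l + 1 - r)) ∧
    (l = 1 → B n p 2 = n.choose 2) := by
  subst hl hr hr₁
  refine ⟨fun hl => ?_, fun hl => ?_⟩
  · obtain ⟨a, b, q, rfl⟩ : ∃ a b q, p = a :: b :: q := by
      match p, hl with
      | a :: b :: q, _ => exact ⟨a, b, q, rfl⟩
    rw [B_eq_countWords, countWords_occ_eq_two, shiftedChoose_succ_right,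
      ← numRuns_add_repeats (a :: b :: q)]
    congr 2
    omega
  · obtain ⟨a, rfl⟩ := length_eq_one_iff.1 hl
    simpa [B_eq_countWords, occ_singleton] using countWords_count_eq a n 2
end

section
/- Let p be a binary word of length l, and for each i ≥ 1 let r_i be the number of runs of p of size i. Then for any k ≥ 2, the number of binary words of length l + 1 containing exactly k occurrences of p equals r_{k−1}; that is, B_{l+1,p}(k) = r_{k−1}. -/
/-!
A word `w` of length `|p| + 1` containing `p` arises from `p` by inserting one letter; sliding
that letter to the end of its block writes `w = A bᵐ⁺¹ C` and `p = A bᵐ C` with `bᵐ` a maximal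
block. An occurrence of `p` in `w` must then omit one of these `m + 1` letters `b`, so
`c_p(w) = m + 1`. Hence for `k ≥ 2` the words counted by `B_{l+1,p}(k)` are exactly those obtained
by lengthening a run of `p` of size `k - 1` by one letter, and distinct runs give distinct words
because the runs of the result show which run was lengthened.
-/

namespace List

variable {α : Type*}

section Sublists

variable [DecidableEq α]

theorem count_sublists_cons_cons (a b : α) (p w : List α) :
    (a :: w).sublists.count (b :: p) =
      w.sublists.count (b :: p) + if a = b then w.sublists.count p else 0 := by
  rw [(sublists_cons_perm_append a w).count_eq, count_append]
  congr 1
  split_ifs with hab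
  · subst hab
    exact count_map_of_injective _ _ cons_injective _
  · exact count_eq_zero.2 (by simp [hab])

theorem count_sublists_eq_zero {p w : List α} (hlen : w.length ≤ p.length) (hne : p ≠ w) :
    w.sublists.count p = 0 :=
  count_eq_zero.2 fun hp =>
    hne ((mem_sublists.1 hp).eq_of_length_le hlen)

theorem count_self_sublists : ∀ w : List α, w.sublists.count w = 1
  | [] => rfl
  | a :: w => by
    rw [count_sublists_cons_cons, if_pos rfl, count_self_sublists w,
      count_sublists_eq_zero (by simp) (by simp)]

/-- Occurrences that skip a letter of the common prefix `A` are impossible, because the letter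
of `A ++ X` at position `A.length - 1` would have to match the first letter of `Y`. -/
theorem count_sublists_append_append {A X Y : List α} (hlen : Y.length = X.length + 1)
    (hA : A.getLast? ≠ Y.head?) :
    (A ++ Y).sublists.count (A ++ X) = Y.sublists.count X := by
  induction A with
  | nil => rfl
  | cons a A ih =>
    have hne : a :: (A ++ X) ≠ A ++ Y := fun h => hA <| by
      have h' := congrArg (·[A.length]?) h
      rw [getElem?_append_right le_rfl, Nat.sub_self, ← head?_eq_getElem?, ← cons_append,
        getElem?_append_left (by simp)] at h'
      rw [getLast?_eq_getElem?, ← h', length_cons, Nat.add_sub_cancel]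
    have hA' : A.getLast? ≠ Y.head? := by
      cases A with
      | nil => cases Y <;> simp_all
      | cons c A => simpa using hA
    rw [cons_append, cons_append, count_sublists_cons_cons, if_pos rfl,
      count_sublists_eq_zero (by simp [hlen]; omega) hne, zero_add, ih hA']

theorem count_sublists_replicate_append {C : List α} {b : α} (hC : C.head? ≠ some b) :
    ∀ m : ℕ, (replicate (m + 1) b ++ C).sublists.count (replicate m b ++ C) = m + 1
  | 0 => by
    cases C with
    | nil => simp
    | cons c C =>
      rw [replicate_one, replicate_zero, nil_append, singleton_append,
        count_sublists_cons_cons, count_self_sublists, if_neg (by simpa [eq_comm] using hC)]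
  | m + 1 => by
    show (b :: (replicate (m + 1) b ++ C)).sublists.count (b :: (replicate m b ++ C)) = _
    rw [count_sublists_cons_cons, if_pos rfl, ← cons_append, ← replicate_succ,
      count_self_sublists, count_sublists_replicate_append hC m]
    omega

theorem count_sublists_append_replicate_append {A C : List α} {b : α} (m : ℕ)
    (hA : A.getLast? ≠ some b) (hC : C.head? ≠ some b) :
    (A ++ replicate (m + 1) b ++ C).sublists.count (A ++ replicate m b ++ C) = m + 1 := by
  rw [append_assoc, append_assoc,
    count_sublists_append_append (by simp; omega) (by simpa [replicate_succ] using hA),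
    count_sublists_replicate_append hC]

end Sublists

theorem Sublist.exists_eq_append_cons_of_length_eq_add_one {p w : List α} (h : p <+ w)
    (hlen : w.length = p.length + 1) : ∃ A b C, w = A ++ b :: C ∧ p = A ++ C := by
  induction h with
  | slnil => simp at hlen
  | @cons p w a h _ =>
    exact ⟨[], a, w, rfl, h.eq_of_length (by simpa using hlen.symm)⟩
  | @cons_cons p w a _ ih =>
    obtain ⟨A, b, C, rfl, rfl⟩ := ih (by simpa using hlen)
    exact ⟨a :: A, b, C, rfl, rfl⟩

theorem exists_eq_replicate_append (b : α) :
    ∀ C : List α, ∃ n C', C = replicate n b ++ C' ∧ C'.head? ≠ some b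
  | [] => ⟨0, [], rfl, by simp⟩
  | c :: C => by
    by_cases hc : c = b
    · obtain ⟨n, C', rfl, hC'⟩ := exists_eq_replicate_append b C
      exact ⟨n + 1, C', by simp [hc, replicate_succ], hC'⟩
    · exact ⟨0, c :: C, rfl, by simpa using hc⟩

theorem exists_eq_append_replicate (b : α) (A : List α) :
    ∃ A' n, A = A' ++ replicate n b ∧ A'.getLast? ≠ some b := by
  obtain ⟨n, A', hA, hA'⟩ := exists_eq_replicate_append b A.reverse
  refine ⟨A'.reverse, n, ?_, by simpa using hA'⟩
  rw [← reverse_reverse A, hA, reverse_append, reverse_replicate]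

theorem exists_maximal_block_of_eq_append_cons (A C : List α) (b : α) :
    ∃ A' m C', A ++ b :: C = A' ++ replicate (m + 1) b ++ C' ∧
      A ++ C = A' ++ replicate m b ++ C' ∧ A'.getLast? ≠ some b ∧ C'.head? ≠ some b := by
  obtain ⟨A', s, rfl, hA'⟩ := exists_eq_append_replicate b A
  obtain ⟨t, C', rfl, hC'⟩ := exists_eq_replicate_append b C
  refine ⟨A', s + t, C', ?_, by simp [← replicate_append_replicate], hA', hC'⟩
  simp [← replicate_append_replicate, Nat.add_right_comm s t, replicate_succ']

theorem forall_rel_getLast_head_of_splitBy_eq_append {r : α → α → Bool} {l : List α}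
    {X Y : List (List α)} (h : l.splitBy r = X ++ Y) :
    ∀ x ∈ X.flatten.getLast?, ∀ y ∈ Y.flatten.head?, r x y = false := by
  intro x hx y hy
  have hX : X ≠ [] := by rintro rfl; simp at hx
  have hY : Y ≠ [] := by rintro rfl; simp at hy
  obtain ⟨_, _, hxy⟩ :=
    (h ▸ isChain_getLast_head_splitBy r l).rel_getLast_head_of_append hX hY
  rwa [getLast_getLast_eq_getLast_flatten, head_head_eq_head_flatten,
    getLast_of_mem_getLast? hx, head_of_mem_head? hy] at hxy

end List

open List

theorem flatten_runs (p : List Bool) : (runs p).flatten = p := flatten_splitBy _ p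

theorem runs_flatten_of_isInfix {p : List Bool} {X : List (List Bool)} (h : X <:+: runs p) :
    runs X.flatten = X :=
  splitBy_eq_iff.2 ⟨rfl, fun hn => nil_notMem_splitBy _ p (h.subset hn),
    fun _ hr => isChain_of_mem_splitBy (h.subset hr), (isChain_getLast_head_splitBy _ p).infix h⟩

theorem runs_append_replicate_append {A C : List Bool} {b : Bool} {m : ℕ} (hm : m ≠ 0)
    (hA : A.getLast? ≠ some b) (hC : C.head? ≠ some b) :
    runs (A ++ replicate m b ++ C) = runs A ++ replicate m b :: runs C := by
  have hb : replicate m b ≠ [] := by simpa using hm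
  unfold runs
  rw [splitBy_append, splitBy_append, splitBy_of_isChain hb (isChain_replicate_of_rel m (by simp))]
  · simp
  · intro x hx y hy
    obtain rfl : b = y := by simpa [head?_replicate, hm] using hy
    simpa using fun h : x = b => hA (h ▸ hx)
  · rw [getLast?_append_of_ne_nil _ hb, getLast?_replicate, if_neg hm]
    intro x hx y hy
    obtain rfl : b = x := Option.mem_some_iff.1 hx
    simpa using fun h : b = y => hC (h ▸ hy)

theorem exists_maximal_block_of_lt_length_runs {p : List Bool} {j : ℕ}
    (hj : j < (runs p).length) :
    ∃ A b m C, p = A ++ replicate m b ++ C ∧ m ≠ 0 ∧ A.getLast? ≠ some b ∧ C.head? ≠ some b ∧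
      (runs A).length = j := by
  set L := runs p with hL
  have hsplit : L = L.take j ++ L[j] :: L.drop (j + 1) := by
    rw [← drop_eq_getElem_cons hj, take_append_drop]
  have hne : L[j] ≠ [] := ne_nil_of_mem_splitBy (getElem_mem hj)
  set b := L[j].head hne
  have hrepl : L[j] = replicate L[j].length b :=
    isChain_eq_iff_eq_replicate.1 ((isChain_of_mem_splitBy (getElem_mem hj)).imp
      fun _ _ => beq_iff_eq.1) b (head_mem_head? hne)
  refine ⟨(L.take j).flatten, b, L[j].length, (L.drop (j + 1)).flatten, ?_, ?_, ?_, ?_, ?_⟩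
  · conv_lhs => rw [← flatten_runs p, ← hL, hsplit]
    rw [flatten_append, flatten_cons, ← hrepl, append_assoc]
  · exact (length_pos_iff.2 hne).ne'
  · intro h
    have := forall_rel_getLast_head_of_splitBy_eq_append hsplit b (by simp [h]) b
      (by rw [flatten_cons, head?_append_of_ne_nil _ hne, head?_eq_some_head hne]; rfl)
    simp at this
  · intro h
    have := forall_rel_getLast_head_of_splitBy_eq_append
      (X := L.take j ++ [L[j]]) (by rw [append_assoc]; exact hsplit) b
      (by rw [flatten_append, flatten_singleton, getLast?_append_of_ne_nil _ hne, hrepl,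
        getLast?_replicate, if_neg (by simpa using hne)]; rfl) b (by simp [h])
    simp at this
  · rw [runs_flatten_of_isInfix (take_prefix _ _).isInfix, length_take]
    exact min_eq_left hj.le

def extendRun (p : List Bool) (j : ℕ) : List Bool :=
  ((runs p).modify j fun r => r.head! :: r).flatten

theorem modify_runs_append_replicate_append {A C : List Bool} {b : Bool} {m : ℕ} (hm : m ≠ 0)
    (hA : A.getLast? ≠ some b) (hC : C.head? ≠ some b) :
    (runs (A ++ replicate m b ++ C)).modify (runs A).length (fun r => r.head! :: r) =
      runs (A ++ replicate (m + 1) b ++ C) := by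
  rw [runs_append_replicate_append hm hA hC, runs_append_replicate_append m.succ_ne_zero hA hC,
    modify_eq_take_cons_drop (by simp)]
  obtain ⟨n, rfl⟩ := Nat.exists_eq_succ_of_ne_zero hm
  simp [replicate_succ]

theorem extendRun_append_replicate_append {A C : List Bool} {b : Bool} {m : ℕ} (hm : m ≠ 0)
    (hA : A.getLast? ≠ some b) (hC : C.head? ≠ some b) :
    extendRun (A ++ replicate m b ++ C) (runs A).length = A ++ replicate (m + 1) b ++ C := by
  rw [extendRun, modify_runs_append_replicate_append hm hA hC, flatten_runs]

theorem runs_extendRun {p : List Bool} {j : ℕ} (hj : j < (runs p).length) :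
    runs (extendRun p j) = (runs p).modify j fun r => r.head! :: r := by
  obtain ⟨A, b, m, C, rfl, hm, hA, hC, rfl⟩ := exists_maximal_block_of_lt_length_runs hj
  rw [extendRun_append_replicate_append hm hA hC, modify_runs_append_replicate_append hm hA hC]

theorem length_extendRun {p : List Bool} {j : ℕ} (hj : j < (runs p).length) :
    (extendRun p j).length = p.length + 1 := by
  obtain ⟨A, b, m, C, rfl, hm, hA, hC, rfl⟩ := exists_maximal_block_of_lt_length_runs hj
  rw [extendRun_append_replicate_append hm hA hC]
  simp only [length_append, length_replicate]
  omega

theorem occ_extendRun {p : List Bool} {j : ℕ} (hj : j < (runs p).length) :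
    occ p (extendRun p j) = (runs p)[j].length + 1 := by
  obtain ⟨A, b, m, C, rfl, hm, hA, hC, rfl⟩ := exists_maximal_block_of_lt_length_runs hj
  simp only [extendRun_append_replicate_append hm hA hC, runs_append_replicate_append hm hA hC,
    getElem_append_right le_rfl, Nat.sub_self, getElem_cons_zero, length_replicate]
  exact count_sublists_append_replicate_append m hA hC

theorem extendRun_injOn (p : List Bool) :
    Set.InjOn (extendRun p) {j | j < (runs p).length} := by
  intro i hi j hj h
  by_contra hij
  have h' := congrArg (fun w => (runs w)[i]?) h
  simp [runs_extendRun hi, runs_extendRun hj, getElem?_modify_ne _ _ (Ne.symm hij),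
    getElem?_eq_getElem hi] at h'

theorem exists_extendRun_eq {p w : List Bool} (hlen : w.length = p.length + 1)
    (hocc : 2 ≤ occ p w) :
    ∃ j, ∃ hj : j < (runs p).length, (runs p)[j].length + 1 = occ p w ∧ extendRun p j = w := by
  obtain ⟨A, b, C, rfl, rfl⟩ := (mem_sublists.1 (count_pos_iff.1 (by unfold occ at hocc; omega))
    ).exists_eq_append_cons_of_length_eq_add_one hlen
  obtain ⟨A', m, C', hw, hp, hA, hC⟩ := exists_maximal_block_of_eq_append_cons A C b
  have hocc' : occ (A ++ C) (A ++ b :: C) = m + 1 := by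
    rw [hw, hp]; exact count_sublists_append_replicate_append m hA hC
  have hm : m ≠ 0 := by omega
  rw [hocc', hw, hp]
  simp only [runs_append_replicate_append hm hA hC]
  exact ⟨(runs A').length, by simp, by simp, extendRun_append_replicate_append hm hA hC⟩

theorem numRunsOfSize_eq_card (p : List Bool) (m : ℕ) :
    numRunsOfSize p m = Nat.card {j : Fin (runs p).length // (runs p)[(j : ℕ)].length = m} := by
  rw [Nat.card_eq_fintype_card, Fintype.card_subtype, numRunsOfSize]
  have := Fin.card_filter_univ_eq_vector_get_eq_count m
    (⟨(runs p).map length, length_map _⟩ : List.Vector ℕ (runs p).length)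
  simpa [List.Vector.get] using this.symm

theorem B_length_succ_eq_numRunsOfSize (p : List Bool) (l : ℕ) (hl : p.length = l)
    (k : ℕ) (hk : 2 ≤ k) :
    B (l + 1) p k = numRunsOfSize p (k - 1) := by
  subst hl
  rw [B, numRunsOfSize_eq_card]
  symm
  refine Nat.card_congr (Equiv.ofBijective
    (fun j => ⟨extendRun p j, length_extendRun j.1.2, by rw [occ_extendRun j.1.2, j.2]; omega⟩)
    ⟨fun i j h => ?_, fun ⟨w, hw, hocc⟩ => ?_⟩)
  · exact Subtype.ext (Fin.ext (extendRun_injOn p i.1.2 j.1.2 (congrArg Subtype.val h)))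
  · obtain ⟨j, hj, hjk, rfl⟩ := exists_extendRun_eq hw (hocc ▸ hk)
    exact ⟨⟨⟨j, hj⟩, by show (runs p)[j].length = k - 1; omega⟩, rfl⟩
end
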